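/- arXiv:2306.14414 — 7 statements merged into one kernel-verified Lean document; each statement's English description precedes it below -/
import Mathlib

section
/- If W is an element of Z[ζ_p] that can be written as Σ_{i=0}^{p-1} w_i ζ_p^i with each w_i a nonnegative integer strictly less than q = p^n and Σ w_i = q, and if p^n divides W in Z[ζ_p], then W = 0. -/
/-!
Since `cyclotomic p ℤ = 1 + X + ⋯ + X ^ (p - 1)` is the minimal polynomial of `ζ`, every element
of `ℤ[ζ]` is the value at `ζ` of a unique integer polynomial of degree `< p - 1`. Subtracting
`w_{p-1} (1 + ζ + ⋯ + ζ ^ (p - 1)) = 0` from `W` gives such a representation with coefficients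
`w_i - w_{p-1}`, so `p ^ n ∣ W` forces `p ^ n ∣ w_i - w_j`. As `0 ≤ w_i < p ^ n`, all `w_i` are
equal and `W` is a multiple of `1 + ζ + ⋯ + ζ ^ (p - 1) = 0`.
-/

open Polynomial

namespace IsPrimitiveRoot

variable {K : Type*} [Field K] {k : ℕ} {ζ : K}

theorem sum_fin_pow_eq_zero (hζ : IsPrimitiveRoot ζ k) (hk : 1 < k) :
    ∑ i : Fin k, ζ ^ (i : ℕ) = 0 := by
  rw [Fin.sum_univ_eq_sum_range (ζ ^ ·)]
  exact hζ.geom_sum_eq_zero hk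

variable [CharZero K]

theorem eq_zero_of_aeval_eq_zero_of_degree_lt_totient (hζ : IsPrimitiveRoot ζ k) (hk : 0 < k)
    {f : ℤ[X]} (hf : aeval ζ f = 0) (hdeg : f.degree < k.totient) : f = 0 := by
  refine eq_zero_of_dvd_of_degree_lt ?_ (by rwa [degree_cyclotomic])
  rw [cyclotomic_eq_minpoly hζ hk]
  exact minpoly.isIntegrallyClosed_dvd (hζ.isIntegral hk) hf

theorem dvd_coeff_of_aeval_eq_mul (hζ : IsPrimitiveRoot ζ k) (hk : 0 < k) {f : ℤ[X]}
    (hdeg : f.degree < k.totient) {m : ℤ} {r : K} (hr : r ∈ Algebra.adjoin ℤ {ζ})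
    (h : aeval ζ f = m * r) (i : ℕ) : m ∣ f.coeff i := by
  rw [Algebra.adjoin_singleton_eq_range_aeval] at hr
  obtain ⟨P, rfl⟩ := hr
  set g := P %ₘ cyclotomic k ℤ
  have hg : aeval ζ g = aeval ζ P := by
    refine aeval_modByMonic_eq_self_of_root ?_
    simpa [aeval_def, eval₂_eq_eval_map] using hζ.isRoot_cyclotomic hk
  have hgdeg : (m • g).degree < k.totient :=
    (degree_smul_le m g).trans_lt <|
      degree_cyclotomic k ℤ ▸ degree_modByMonic_lt P (cyclotomic.monic k ℤ)
  have : f = m • g := by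
    refine sub_eq_zero.1 <| hζ.eq_zero_of_aeval_eq_zero_of_degree_lt_totient hk ?_
      ((degree_sub_le _ _).trans_lt (max_lt hdeg hgdeg))
    simp [hg, h]
  rw [this, coeff_smul, smul_eq_mul]
  exact dvd_mul_right _ _

theorem dvd_sub_of_sum_mul_pow_eq_mul {p : ℕ} (hζ : IsPrimitiveRoot ζ p) (hp : p.Prime)
    (a : Fin p → ℤ) {m : ℤ} {r : K} (hr : r ∈ Algebra.adjoin ℤ {ζ})
    (h : ∑ i, (a i : K) * ζ ^ (i : ℕ) = m * r) (i j : Fin p) : m ∣ a i - a j := by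
  obtain ⟨k, rfl⟩ := Nat.exists_eq_succ_of_ne_zero hp.ne_zero
  suffices hlast : ∀ i, m ∣ a i - a (Fin.last k) by
    simpa using dvd_sub (hlast i) (hlast j)
  set f := ofFn k fun j ↦ a j.castSucc - a (Fin.last k)
  have hf : aeval ζ f = m * r := by
    calc aeval ζ f = ∑ j : Fin k, ((a j.castSucc - a (Fin.last k) : ℤ) : K) * ζ ^ (j : ℕ) := by
          simp [f, ofFn_eq_sum_monomial, aeval_monomial, mul_comm, mul_sub]
      _ = ∑ i : Fin (k + 1), ((a i : K) - a (Fin.last k)) * ζ ^ (i : ℕ) := by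
          simp [Fin.sum_univ_castSucc]
      _ = m * r := by
          simp only [sub_mul, Finset.sum_sub_distrib, ← Finset.mul_sum,
            hζ.sum_fin_pow_eq_zero hp.one_lt, mul_zero, sub_zero, h]
  have hdeg : f.degree < (k + 1).totient := by
    rw [Nat.totient_prime hp]
    exact ofFn_degree_lt _
  refine Fin.lastCases (by simp) (fun j ↦ ?_)
  simpa [f] using hζ.dvd_coeff_of_aeval_eq_mul k.succ_pos hdeg hr hf j

end IsPrimitiveRoot

theorem stmt_1_general (p n : ℕ) (hp : p.Prime)
    (ζ : ℂ) (hζ : ζ = Complex.exp (2 * Real.pi * Complex.I / p))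
    (w : Fin p → ℕ) (hlt : ∀ i, w i < p ^ n)
    (W : ℂ) (hW : W = ∑ i, (w i : ℂ) * ζ ^ (i : ℕ))
    (hdvd : ∃ r ∈ Algebra.adjoin ℤ ({ζ} : Set ℂ), W = (p : ℂ) ^ n * r) :
    W = 0 := by
  have hprim : IsPrimitiveRoot ζ p := hζ ▸ Complex.isPrimitiveRoot_exp p hp.ne_zero
  obtain ⟨r, hr, hWr⟩ := hdvd
  have hconst (i j : Fin p) : w i = w j := by
    have hpn : ((p ^ n : ℕ) : ℤ) ∣ w j - w i := by
      exact_mod_cast hprim.dvd_sub_of_sum_mul_pow_eq_mul hp (fun i ↦ w i) hr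
        (by push_cast; rw [← hW, hWr]) j i
    exact (Nat.modEq_iff_dvd.2 hpn).eq_of_lt_of_lt (hlt i) (hlt j)
  let i₀ : Fin p := ⟨0, hp.pos⟩
  calc W = w i₀ * ∑ i : Fin p, ζ ^ (i : ℕ) := by
        simp only [hW, Finset.mul_sum, hconst _ i₀]
    _ = 0 := by rw [hprim.sum_fin_pow_eq_zero hp.one_lt, mul_zero]

/-- If `W ∈ ℤ[ζ_p]` can be written as `∑ w_i ζ^i` with nonnegative integer coefficients
strictly less than `q = p^n` summing to `q`, and `p^n` divides `W` in `ℤ[ζ_p]`,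
then `W = 0`. -/
theorem stmt_1 (p n : ℕ) (hp : p.Prime) (hn : 0 < n)
    (ζ : ℂ) (hζ : ζ = Complex.exp (2 * Real.pi * Complex.I / p))
    (w : Fin p → ℕ) (hlt : ∀ i, w i < p ^ n) (hsum : ∑ i, w i = p ^ n)
    (W : ℂ) (hW : W = ∑ i, (w i : ℂ) * ζ ^ (i : ℕ))
    (hdvd : ∃ r ∈ Algebra.adjoin ℤ ({ζ} : Set ℂ), W = (p : ℂ) ^ n * r) :
    W = 0 :=
  stmt_1_general p n hp ζ hζ w hlt W hW hdvd
end

section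
/- For a finite field K of order q and invertible exponent s, one has Σ_{u∈K^×} W_u W̄_{u} = Σ_{u∈K^×} |W_u|² = q², where W_u = Σ_{x∈K} ψ(x^s − u x). More precisely, since the W_u are real, Σ_{u∈K^×} W_u² = q². -/
/-!
Expanding `|W_u|²` and summing over all `u ∈ K`, orthogonality of `ψ` collapses the double sum
over `(x, y)` to the diagonal `x = y`, which gives `q · q` (Parseval). Since `x ↦ x ^ s` is a
bijection, `W_0 = ∑ ψ (x ^ s) = ∑ ψ x = 0`, so dropping `u = 0` changes nothing. Injectivity of
`x ↦ x ^ s` also forces `(-1) ^ s = -1`, and then the substitution `x ↦ -x` shows that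
`conj W_u = W_u`, so `W_u² = |W_u|²`.
-/

open Finset ComplexConjugate

lemma pow_injective_of_coprime_card_sub_one {M₀ : Type*} [GroupWithZero M₀] [Finite M₀] {s : ℕ}
    (hs : s ≠ 0) (hcop : s.Coprime (Nat.card M₀ - 1)) : Function.Injective (· ^ s : M₀ → M₀) := by
  have hunits : (Nat.card M₀ˣ).Coprime s := by rw [Nat.card_units]; exact hcop.symm
  intro x y hxy
  simp only at hxy
  rcases eq_or_ne x 0 with rfl | hx
  · rw [zero_pow hs, eq_comm, pow_eq_zero_iff hs] at hxy
    exact hxy.symm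
  rcases eq_or_ne y 0 with rfl | hy
  · rwa [zero_pow hs, pow_eq_zero_iff hs] at hxy
  have : Units.mk0 x hx ^ s = Units.mk0 y hy ^ s := Units.ext (by simpa using hxy)
  exact congrArg Units.val ((powCoprime hunits).injective this)

lemma neg_one_pow_of_pow_injective {R : Type*} [CommRing R] [NoZeroDivisors R] {s : ℕ}
    (hinj : Function.Injective (· ^ s : R → R)) : (-1 : R) ^ s = -1 := by
  have hsq : ((-1 : R) ^ s) ^ 2 = 1 := by rw [← pow_mul', pow_mul, neg_one_sq, one_pow]
  rcases sq_eq_one_iff.mp hsq with h | h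
  · rw [h, hinj (h.trans (one_pow s).symm)]
  · exact h

lemma sum_units_eq_sum {M₀ M : Type*} [GroupWithZero M₀] [Fintype M₀] [DecidableEq M₀]
    [AddCommMonoid M] {f : M₀ → M} (hf : f 0 = 0) : ∑ u : M₀ˣ, f u = ∑ x, f x := by
  calc ∑ u : M₀ˣ, f u = ∑ x : {x : M₀ // x ≠ 0}, f x :=
        Fintype.sum_equiv unitsEquivNeZero _ _ fun _ => rfl
    _ = ∑ x, f x := by
        rw [← Finset.sum_subtype {x | x ≠ 0} (fun _ => by simp), Finset.sum_filter_of_ne]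
        rintro x - hfx rfl
        exact hfx hf

namespace AddChar

noncomputable def traceChar (p : ℕ) [NeZero p] (K : Type*) [Field K] [Algebra (ZMod p) K]
    {C : Type*} [CommMonoid C] {ζ : C} (hζ : ζ ^ p = 1) : AddChar K C :=
  (zmodChar p hζ).compAddMonoidHom (Algebra.trace (ZMod p) K).toAddMonoidHom

lemma traceChar_apply {p : ℕ} [NeZero p] {K : Type*} [Field K] [Algebra (ZMod p) K]
    {C : Type*} [CommMonoid C] {ζ : C} (hζ : ζ ^ p = 1) (x : K) :
    traceChar p K hζ x = ζ ^ (Algebra.trace (ZMod p) K x).val :=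
  rfl

lemma traceChar_ne_one {p : ℕ} [Fact p.Prime] {K : Type*} [Field K] [Finite K]
    [Algebra (ZMod p) K] {C : Type*} [CommMonoid C] {ζ : C} (hζ : IsPrimitiveRoot ζ p) :
    traceChar p K hζ.pow_eq_one ≠ 1 := by
  have := Fintype.ofFinite K
  obtain ⟨a, ha⟩ := Algebra.trace_surjective (ZMod p) K 1
  refine ne_one_iff.mpr ⟨a, ?_⟩
  rw [traceChar_apply, ha, ZMod.val_one, pow_one]
  exact hζ.ne_one (Fact.out : p.Prime).one_lt

end AddChar

section WeilSum

variable {K : Type*} [Field K] [Fintype K]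

def weilSum {R : Type*} [CommRing R] (ψ : AddChar K R) (s : ℕ) (u : K) : R :=
  ∑ x, ψ (x ^ s - u * x)

lemma weilSum_zero {R : Type*} [CommRing R] [IsDomain R] {ψ : AddChar K R} (hψ : ψ ≠ 1) {s : ℕ}
    (hs : Function.Bijective (· ^ s : K → K)) : weilSum ψ s 0 = 0 := by
  simp only [weilSum, zero_mul, sub_zero]
  rw [Fintype.sum_bijective _ hs _ ψ fun _ => rfl, AddChar.sum_eq_zero_of_ne_one hψ]

variable {𝕜 : Type*} [RCLike 𝕜] {ψ : AddChar K 𝕜} {s : ℕ}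

lemma weilSum_mul_conj (u : K) :
    weilSum ψ s u * conj (weilSum ψ s u) =
      ∑ x, ∑ y, ψ (x ^ s - y ^ s) * ψ (u * (y - x)) := by
  rw [weilSum, map_sum, sum_mul_sum]
  refine sum_congr rfl fun x _ => sum_congr rfl fun y _ => ?_
  rw [← AddChar.map_neg_eq_conj, ← AddChar.map_add_eq_mul, ← AddChar.map_add_eq_mul]
  ring_nf

lemma sum_weilSum_mul_conj (hψ : ψ ≠ 1) :
    ∑ u, weilSum ψ s u * conj (weilSum ψ s u) = (Fintype.card K : 𝕜) ^ 2 := by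
  classical
  have horth (x y : K) : ∑ u, ψ (u * (y - x)) = if x = y then (Fintype.card K : 𝕜) else 0 := by
    rw [AddChar.sum_mulShift _ (AddChar.IsPrimitive.of_ne_one hψ)]
    simp [sub_eq_zero, eq_comm]
  calc ∑ u, weilSum ψ s u * conj (weilSum ψ s u)
      = ∑ x, ∑ y, ψ (x ^ s - y ^ s) * ∑ u, ψ (u * (y - x)) := by
        simp_rw [weilSum_mul_conj, mul_sum]
        rw [sum_comm]
        exact sum_congr rfl fun x _ => sum_comm
    _ = (Fintype.card K : 𝕜) ^ 2 := by
        simp [horth, sq]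

lemma conj_weilSum (hs : (-1 : K) ^ s = -1) (u : K) : conj (weilSum ψ s u) = weilSum ψ s u := by
  rw [weilSum, map_sum]
  refine Fintype.sum_equiv (Equiv.neg K) _ _ fun x => ?_
  rw [← AddChar.map_neg_eq_conj, Equiv.neg_apply, neg_pow, hs]
  ring_nf

end WeilSum

theorem stmt_4_general (p n s : ℕ) (hp : p.Prime)
    (K : Type*) [Field K] [Fintype K] [DecidableEq K] [Algebra (ZMod p) K]
    (hcard : Fintype.card K = p ^ n)
    (hs : 0 < s) (hgcd : Nat.Coprime s (p ^ n - 1))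
    (ζ : ℂ) (hζ : ζ = Complex.exp (2 * Real.pi * Complex.I / p))
    (ψ : K → ℂ) (hψ : ∀ x, ψ x = ζ ^ (Algebra.trace (ZMod p) K x).val)
    (W : K → ℂ) (hW : ∀ u, W u = ∑ x : K, ψ (x ^ s - u * x)) :
    (∑ u : Kˣ, W (u : K) * (starRingEnd ℂ) (W (u : K))) = ((p : ℂ) ^ n) ^ 2
      ∧ (∑ u : Kˣ, (W (u : K)) ^ 2) = ((p : ℂ) ^ n) ^ 2 := by
  have : Fact p.Prime := ⟨hp⟩
  have hprim : IsPrimitiveRoot ζ p := hζ ▸ Complex.isPrimitiveRoot_exp p hp.ne_zero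
  set χ := AddChar.traceChar p K hprim.pow_eq_one
  obtain rfl : ψ = χ := funext hψ
  obtain rfl : W = weilSum χ s := funext hW
  have hinj : Function.Injective (· ^ s : K → K) :=
    pow_injective_of_coprime_card_sub_one hs.ne' (by rwa [Nat.card_eq_fintype_card, hcard])
  have hsum : ∑ u : Kˣ, weilSum χ s u * conj (weilSum χ s u) = ((p : ℂ) ^ n) ^ 2 := by
    have hW0 : weilSum χ s 0 = 0 :=
      weilSum_zero (AddChar.traceChar_ne_one hprim) (Finite.injective_iff_bijective.mp hinj)
    rw [sum_units_eq_sum (f := fun u => weilSum χ s u * conj (weilSum χ s u)) (by simp [hW0]),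
      sum_weilSum_mul_conj (AddChar.traceChar_ne_one hprim), hcard, Nat.cast_pow]
  refine ⟨hsum, hsum ▸ sum_congr rfl fun u _ => ?_⟩
  rw [conj_weilSum (neg_one_pow_of_pow_injective hinj), sq]

/-- `∑_{u ∈ K^×} W_u \overline{W_u} = q²`, and since the `W_u` are real,
`∑_{u ∈ K^×} W_u² = q²`. -/
theorem stmt_4 (p n s : ℕ) (hp : p.Prime) (hn : 0 < n)
    (K : Type*) [Field K] [Fintype K] [DecidableEq K] [CharP K p] [Algebra (ZMod p) K]
    (hcard : Fintype.card K = p ^ n)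
    (hs : 0 < s) (hgcd : Nat.Coprime s (p ^ n - 1))
    (ζ : ℂ) (hζ : ζ = Complex.exp (2 * Real.pi * Complex.I / p))
    (ψ : K → ℂ) (hψ : ∀ x, ψ x = ζ ^ (Algebra.trace (ZMod p) K x).val)
    (W : K → ℂ) (hW : ∀ u, W u = ∑ x : K, ψ (x ^ s - u * x)) :
    (∑ u : Kˣ, W (u : K) * (starRingEnd ℂ) (W (u : K))) = ((p : ℂ) ^ n) ^ 2
      ∧ (∑ u : Kˣ, (W (u : K)) ^ 2) = ((p : ℂ) ^ n) ^ 2 :=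
  stmt_4_general p n s hp K hcard hs hgcd ζ hζ ψ hψ W hW
end

section
/- With notation as in the context, for any k ∈ Z₊, t ∈ (K^×)^k, and a ∈ K^×, one has Q^t_{a,0} = Q^t_{0,a} = (q^{k−1} − Q^t_{0,0})/(q−1). -/
/-!
Multiplying a solution by `u ≠ 0` shows `Q_{ua,uc} = Q_{a,c}`, so for `a ≠ 0` we have
`Q_{a,0} = Q_{1,0}` and `Q_{0,a} = Q_{0,1}`. Since `x ↦ x ^ s` is a bijection of `K`, summing
`Q_{a,0}` over `a` counts the solutions of `∑ vᵢ ^ s = 0`, which correspond to those of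
`∑ wᵢ = 0`, and summing `Q_{0,c}` over `c` counts the hyperplane `∑ tᵢ vᵢ = 0`. Both sets have
`q ^ (k - 1)` points, so `Q_{0,0} + (q - 1) Q_{1,0} = q ^ (k - 1) = Q_{0,0} + (q - 1) Q_{0,1}`.
-/

open Finset Function

section

variable {K ι : Type*} [Field K] [Fintype K] [DecidableEq K] [Fintype ι] [DecidableEq ι]

theorem pow_bijective_of_coprime_card_sub_one {s : ℕ} (hs : s ≠ 0)
    (hcop : s.Coprime (Fintype.card K - 1)) : Bijective fun x : K => x ^ s := by
  rw [← Finite.injective_iff_bijective]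
  have hunits : Injective fun u : Kˣ => u ^ s :=
    (Nat.Coprime.pow_left_bijective <| by
      rwa [Nat.card_eq_fintype_card, Fintype.card_units, Nat.coprime_comm]).injective
  intro x y hxy
  simp only at hxy
  obtain rfl | hx := eq_or_ne x 0
  · exact ((pow_eq_zero_iff hs).1 (hxy ▸ zero_pow hs)).symm
  obtain rfl | hy := eq_or_ne y 0
  · exact (pow_eq_zero_iff hs).1 (hxy.trans (zero_pow hs))
  simpa using congrArg Units.val
    (hunits (a₁ := Units.mk0 x hx) (a₂ := Units.mk0 y hy) (Units.ext (by simpa using hxy)))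

theorem card_filter_sum_mul_eq {t : ι → K} {i : ι} (hi : t i ≠ 0) (a : K) :
    #{v : ι → K | ∑ j, t j * v j = a} = Fintype.card K ^ (Fintype.card ι - 1) := by
  let f : (ι → K) →+ K :=
    AddMonoidHom.mk' (fun v => ∑ j, t j * v j) fun v w => by simp [mul_add, sum_add_distrib]
  have hf : Surjective f := fun b =>
    ⟨Pi.single i (b / t i), by simp [f, Pi.single_apply, mul_div_cancel₀ _ hi]⟩
  have hfib : ∀ b, #{v | f v = b} = #{v | f v = a} := fun b =>
    AddMonoidHom.card_fiber_eq_of_mem_range f (hf b) (hf a)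
  have htotal : Fintype.card K ^ Fintype.card ι = Fintype.card K * #{v | f v = a} := by
    rw [← Fintype.card_fun, ← card_univ, card_eq_sum_card_fiberwise (f := f) (t := univ)
      (fun _ _ => mem_coe.2 (mem_univ _)), sum_congr rfl fun b _ => hfib b, sum_const,
      card_univ, smul_eq_mul]
  have hι : Fintype.card ι = Fintype.card ι - 1 + 1 :=
    (Nat.sub_add_cancel (Fintype.card_pos_iff.2 ⟨i⟩)).symm
  rw [hι, pow_succ'] at htotal
  exact (Nat.eq_of_mul_eq_mul_left Fintype.card_pos htotal).symm

theorem sum_eq_add_nsmul_of_mul_invariant {M : Type*} [AddCommMonoid M] {f : K → M}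
    (hf : ∀ u x, u ≠ 0 → f (u * x) = f x) :
    ∑ x, f x = f 0 + (Fintype.card K - 1) • f 1 := by
  rw [← add_sum_erase univ f (mem_univ 0),
    sum_congr rfl fun x hx => (mul_one x ▸ hf x 1 (ne_of_mem_erase hx) : f x = f 1),
    sum_const, card_erase_of_mem (mem_univ 0), card_univ]

/-- The paper's `Q^t_{a,c}`. -/
def solutionCount (t : ι → K) (s : ℕ) (a c : K) : ℕ :=
  #{v : ι → K | ∑ i, t i * v i = a ∧ ∑ i, v i ^ s = c ^ s}

variable (t : ι → K) (s : ℕ)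

theorem solutionCount_mul {u : K} (hu : u ≠ 0) (a c : K) :
    solutionCount t s (u * a) (u * c) = solutionCount t s a c := by
  rw [solutionCount, ← map_univ_equiv (MulAction.toPerm (Units.mk0 u hu) : Equiv.Perm (ι → K)),
    filter_map, card_map]
  congr 1 with v
  simp [Units.smul_def, mul_left_comm _ u, ← mul_sum, mul_pow, mul_right_inj' hu,
    mul_right_inj' (pow_ne_zero s hu)]

theorem sum_solutionCount_zero_right [Nonempty ι] (hs : s ≠ 0)
    (hpow : Bijective fun x : K => x ^ s) :
    ∑ a, solutionCount t s a 0 = Fintype.card K ^ (Fintype.card ι - 1) := by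
  have hfib : ∑ a, solutionCount t s a 0 = #{v : ι → K | ∑ i, v i ^ s = 0} := by
    rw [card_eq_sum_card_fiberwise (f := fun v => ∑ i, t i * v i) (t := univ)
      (fun _ _ => mem_coe.2 (mem_univ _))]
    simp only [solutionCount, filter_filter, zero_pow hs, and_comm]
  let e : (ι → K) ≃ (ι → K) := Equiv.piCongrRight fun _ => Equiv.ofBijective _ hpow
  obtain ⟨i⟩ := ‹Nonempty ι›
  rw [hfib, ← card_filter_sum_mul_eq (t := fun _ => (1 : K)) (i := i) one_ne_zero 0]
  conv_rhs => rw [← map_univ_equiv e, filter_map, card_map]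
  simp [e]

theorem sum_solutionCount_zero_left (hpow : Bijective fun x : K => x ^ s) {i : ι}
    (hi : t i ≠ 0) :
    ∑ c, solutionCount t s 0 c = Fintype.card K ^ (Fintype.card ι - 1) := by
  rw [← card_filter_sum_mul_eq hi 0, card_eq_sum_card_fiberwise
    (f := fun v => ∑ i, v i ^ s) (t := univ) (fun _ _ => mem_coe.2 (mem_univ _))]
  refine Fintype.sum_bijective _ hpow _ _ fun c => ?_
  simp only [solutionCount, filter_filter]

end

/-- For `a ∈ K^×`, `Q^t_{a,0} = Q^t_{0,a} = (q^{k-1} − Q^t_{0,0})/(q−1)`. -/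
theorem stmt_9 (K : Type*) [Field K] [Fintype K] (q s k : ℕ)
    (hq : Fintype.card K = q) (hs : 0 < s) (hgcd : Nat.Coprime s (q - 1))
    (hk : 0 < k) (t : Fin k → K) (ht : ∀ i, t i ≠ 0)
    (Q : K → K → ℕ)
    (hQ : ∀ a c, Q a c =
      {v : Fin k → K | ∑ i, t i * v i = a ∧ ∑ i, v i ^ s = c ^ s}.ncard)
    (a : K) (ha : a ≠ 0) :
    Q a 0 = Q 0 a ∧
      (Q a 0 : ℚ) = ((q : ℚ) ^ (k - 1) - (Q 0 0 : ℚ)) / ((q : ℚ) - 1) := by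
  classical
  have hQN : ∀ b c, Q b c = solutionCount t s b c := fun b c => by
    rw [hQ, solutionCount, ← Set.ncard_coe_finset, coe_filter]; simp
  have hpow := pow_bijective_of_coprime_card_sub_one hs.ne' (hq ▸ hgcd)
  have : Nonempty (Fin k) := ⟨⟨0, hk⟩⟩
  have hright := sum_solutionCount_zero_right t s hs.ne' hpow
  have hleft := sum_solutionCount_zero_left t s hpow (ht ⟨0, hk⟩)
  rw [sum_eq_add_nsmul_of_mul_invariant fun u b hu => by
    simpa using solutionCount_mul t s hu b 0] at hright
  rw [sum_eq_add_nsmul_of_mul_invariant fun u c hu => by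
    simpa using solutionCount_mul t s hu 0 c] at hleft
  simp only [hq, Fintype.card_fin, smul_eq_mul] at hright hleft
  have ha0 : solutionCount t s a 0 = solutionCount t s 1 0 := by
    simpa using solutionCount_mul t s ha 1 0
  have h0a : solutionCount t s 0 a = solutionCount t s 0 1 := by
    simpa using solutionCount_mul t s ha 0 1
  have hq1 : 1 < q := hq ▸ Fintype.one_lt_card
  have hswap : solutionCount t s 1 0 = solutionCount t s 0 1 :=
    Nat.eq_of_mul_eq_mul_left (Nat.sub_pos_of_lt hq1) (by omega)
  refine ⟨by rw [hQN, hQN, ha0, h0a, hswap], ?_⟩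
  have hq1' : (q : ℚ) - 1 ≠ 0 := sub_ne_zero.2 (by exact_mod_cast hq1.ne')
  rw [hQN, hQN, ha0, ← Nat.cast_pow, ← hright, eq_div_iff hq1']
  push_cast [Nat.cast_sub hq1.le]
  ring
end

section
/- With notation as in the context, for any k ∈ Z₊, scalars b, t₁, …, t_k ∈ K^×, and a ∈ K, one has Q^{(t₁,…,t_k)}_{a,b} = (Q^{(a/b,t₁,…,t_k)}_{0,0} − Q^{(t₁,…,t_k)}_{0,0})/(q−1). -/
/-!
Split the solutions `w = (x, v)` of the homogeneous system for `(a/b, t)` according to their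
first coordinate `x`. The fibre over `x = 0` is the homogeneous solution set for `t`. For `x ≠ 0`
the fibre is the system for `t` with right-hand sides `(-(a/b) x, -x^s)`, which is `Q^t_{a,b}`
rescaled by `λ = -x/b`; this uses `(-1)^s = -1`, which holds because `s` is odd unless the
characteristic is `2`. Hence `Q^{(a/b,t)}_{0,0} = Q^t_{0,0} + (q-1) Q^t_{a,b}`.
-/

open Finset Pointwise

theorem FiniteField.neg_one_pow_of_coprime_card_sub_one {K : Type*} [Field K] [Fintype K] {s : ℕ}
    (hs : s.Coprime (Fintype.card K - 1)) : (-1 : K) ^ s = -1 := by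
  by_cases hchar : ringChar K = 2
  · rw [neg_one_eq_one_iff.mpr hchar, one_pow]
  · have hcard := FiniteField.odd_card_of_char_ne_two hchar
    have hodd : Odd s := (hs.coprime_dvd_right (by omega : 2 ∣ Fintype.card K - 1)).odd_of_right
    exact hodd.neg_one_pow

theorem Set.ncard_eq_sum_ncard_fin_cons {α : Type*} [Fintype α] {n : ℕ}
    (S : Set (Fin (n + 1) → α)) :
    S.ncard = ∑ x, {v : Fin n → α | Fin.cons x v ∈ S}.ncard := by
  simp only [← Nat.card_coe_set_eq, Set.coe_ofPred]
  rw [← Nat.card_sigma]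
  exact Nat.card_congr ((Equiv.subtypeEquiv (Fin.consEquiv fun _ => α).symm fun _ => by
    simp [Fin.consEquiv]).trans (Equiv.subtypeProdEquivSigmaSubtype fun x v => Fin.cons x v ∈ S))

section PowerSumSystem

variable {K ι : Type*} [Field K] [Fintype ι]

/-- `Q^t_{a,b}` is the cardinality of `powerSumSystem s t a (b ^ s)`. -/
def powerSumSystem (s : ℕ) (t : ι → K) (a c : K) : Set (ι → K) :=
  {v | ∑ i, t i * v i = a ∧ ∑ i, v i ^ s = c}

theorem smul_mem_powerSumSystem_iff {s : ℕ} {t : ι → K} {a c l : K} (hl : l ≠ 0)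
    {v : ι → K} :
    l • v ∈ powerSumSystem s t (l * a) (l ^ s * c) ↔ v ∈ powerSumSystem s t a c := by
  simp only [powerSumSystem, Set.mem_ofPred_eq, Pi.smul_apply, smul_eq_mul, mul_pow,
    mul_left_comm (t _), ← mul_sum, mul_right_inj' hl, mul_right_inj' (pow_ne_zero s hl)]

theorem ncard_powerSumSystem_mul {s : ℕ} (t : ι → K) (a c : K) {l : K} (hl : l ≠ 0) :
    (powerSumSystem s t (l * a) (l ^ s * c)).ncard = (powerSumSystem s t a c).ncard := by
  have hscale :
      powerSumSystem s t (l * a) (l ^ s * c) = Units.mk0 l hl • powerSumSystem s t a c := by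
    ext v
    rw [Set.mem_smul_set_iff_inv_smul_mem, Units.smul_def, Units.val_inv_eq_inv_val, Units.val_mk0,
      ← smul_mem_powerSumSystem_iff (a := a) (c := c) hl, smul_inv_smul₀ hl]
  rw [hscale, Set.ncard_smul_set]

theorem powerSumSystem_zero_zero_cons_fiber {n s : ℕ} (u : K) (t : Fin n → K) (x : K) :
    {v | Fin.cons x v ∈ powerSumSystem s (Fin.cons u t) 0 0} =
      powerSumSystem s t (-(u * x)) (-x ^ s) := by
  ext v
  simp only [powerSumSystem, Set.mem_ofPred_eq, Fin.sum_univ_succ, Fin.cons_zero, Fin.cons_succ,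
    add_eq_zero_iff_eq_neg']

theorem ncard_powerSumSystem_cons_div [Fintype K] {n s : ℕ} (hs : 0 < s)
    (hneg : (-1 : K) ^ s = -1) (t : Fin n → K) (a : K) {b : K} (hb : b ≠ 0) :
    (powerSumSystem s (Fin.cons (a / b) t) 0 0).ncard =
      (powerSumSystem s t 0 0).ncard +
        (Fintype.card K - 1) * (powerSumSystem s t a (b ^ s)).ncard := by
  classical
  have hfiber : ∀ x ∈ ({0}ᶜ : Finset K), (powerSumSystem s t (-(a / b * x)) (-x ^ s)).ncard =
      (powerSumSystem s t a (b ^ s)).ncard := by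
    intro x hx
    have hx0 : x ≠ 0 := by simpa using hx
    have hpow : (-(x / b)) ^ s * b ^ s = -x ^ s := by
      rw [← mul_pow, neg_mul, div_mul_cancel₀ x hb, neg_pow, hneg, neg_one_mul]
    rw [← hpow, show -(a / b * x) = -(x / b) * a by ring,
      ncard_powerSumSystem_mul t a (b ^ s) (neg_ne_zero.mpr (div_ne_zero hx0 hb))]
  rw [Set.ncard_eq_sum_ncard_fin_cons, Fintype.sum_eq_add_sum_compl 0]
  simp only [powerSumSystem_zero_zero_cons_fiber, mul_zero, neg_zero, zero_pow hs.ne']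
  rw [sum_congr rfl hfiber, sum_const, card_compl, card_singleton, smul_eq_mul]

end PowerSumSystem

theorem stmt_10_general (K : Type*) [Field K] [Fintype K] (q s k : ℕ)
    (hq : Fintype.card K = q) (hs : 0 < s) (hgcd : Nat.Coprime s (q - 1))
    (t : Fin k → K)
    (a b : K) (hb : b ≠ 0) :
    ({v : Fin k → K | ∑ i, t i * v i = a ∧ ∑ i, v i ^ s = b ^ s}.ncard : ℚ) =
      (({v : Fin (k + 1) → K |
            ∑ i, (Fin.cons (a / b) t : Fin (k + 1) → K) i * v i = 0 ∧ ∑ i, v i ^ s = 0}.ncard : ℚ)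
        - ({v : Fin k → K | ∑ i, t i * v i = 0 ∧ ∑ i, v i ^ s = 0}.ncard : ℚ))
        / ((q : ℚ) - 1) := by
  subst hq
  have hcount := ncard_powerSumSystem_cons_div hs
    (FiniteField.neg_one_pow_of_coprime_card_sub_one hgcd) t a hb
  simp only [powerSumSystem] at hcount
  have hcard : 1 ≤ Fintype.card K := Fintype.card_pos
  have hcardQ : (1 : ℚ) < Fintype.card K := by exact_mod_cast Fintype.one_lt_card
  rw [hcount, eq_div_iff (by linarith)]
  push_cast [Nat.cast_sub hcard]
  ring

/-- For `b, t₁, …, t_k ∈ K^×` and `a ∈ K`,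
`Q^{(t₁,…,t_k)}_{a,b} = (Q^{(a/b,t₁,…,t_k)}_{0,0} − Q^{(t₁,…,t_k)}_{0,0})/(q−1)`. -/
theorem stmt_10 (K : Type*) [Field K] [Fintype K] (q s k : ℕ)
    (hq : Fintype.card K = q) (hs : 0 < s) (hgcd : Nat.Coprime s (q - 1))
    (hk : 0 < k) (t : Fin k → K) (ht : ∀ i, t i ≠ 0)
    (a b : K) (hb : b ≠ 0) :
    ({v : Fin k → K | ∑ i, t i * v i = a ∧ ∑ i, v i ^ s = b ^ s}.ncard : ℚ) =
      (({v : Fin (k + 1) → K |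
            ∑ i, (Fin.cons (a / b) t : Fin (k + 1) → K) i * v i = 0 ∧ ∑ i, v i ^ s = 0}.ncard : ℚ)
        - ({v : Fin k → K | ∑ i, t i * v i = 0 ∧ ∑ i, v i ^ s = 0}.ncard : ℚ))
        / ((q : ℚ) - 1) :=
  stmt_10_general K q s k hq hs hgcd t a b hb
end

section
/- Let K be a finite field of odd characteristic with s coprime to |K|−1. Then Q^{(1,−1)}_{1,1} − 1 = Q^{(1,1)}_{1,−1}; that is, the number of (x₁,x₂) ∈ K² with x₁ − x₂ = 1 and x₁^s + x₂^s = 1, minus one, equals the number of (x₁,x₂) ∈ K² with x₁ + x₂ = 1 and x₁^s + x₂^s = −1. -/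
/-!
Homogenising, the two sets are the affine charts `Z = 1` of the projective curves
`X - Y = Z, Xˢ + Yˢ = Zˢ` and `U + W = Z, Uˢ + Wˢ = -Zˢ`. Since `s` is odd, the coordinate change
`(X : Y : Z) ↦ (X : -Z : Y)` maps the first curve onto the second. In affine coordinates this is
`(x, y) ↦ (x / y, -1 / y)`, defined away from `y = 0`; the only affine point of the first curve
with `y = 0` is `(1, 0)`, while no affine point of the second has `w = 0` because `2 ≠ 0`.
-/

section Bijection

variable {K : Type*} [Field K] {s : ℕ}

lemma snd_ne_zero_of_sub_eq_one {v : K × K} (h : v.1 - v.2 = 1) (hv : v ≠ (1, 0)) : v.2 ≠ 0 := by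
  rintro h0
  exact hv (Prod.ext (by simpa [h0] using h) h0)

lemma snd_ne_zero_of_add_eq_one_of_pow_add_pow_eq_neg_one (hs : s ≠ 0) (h2 : (2 : K) ≠ 0)
    {v : K × K} (h : v.1 + v.2 = 1) (hpow : v.1 ^ s + v.2 ^ s = -1) : v.2 ≠ 0 := by
  rintro h0
  rw [h0, add_zero] at h
  rw [h, h0, one_pow, zero_pow hs, add_zero] at hpow
  exact h2 (by linear_combination hpow)

theorem bijOn_div_snd_of_odd (hs : Odd s) (h2 : (2 : K) ≠ 0) :
    Set.BijOn (fun v : K × K => (v.1 / v.2, -1 / v.2))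
      ({v : K × K | v.1 - v.2 = 1 ∧ v.1 ^ s + v.2 ^ s = 1} \ {(1, 0)})
      {v : K × K | v.1 + v.2 = 1 ∧ v.1 ^ s + v.2 ^ s = -1} := by
  have hneg : ∀ x : K, (-x) ^ s = -x ^ s := hs.neg_pow
  refine Set.InvOn.bijOn (f' := fun v : K × K => (-v.1 / v.2, -1 / v.2)) ⟨?_, ?_⟩ ?_ ?_
  · rintro v ⟨⟨h, -⟩, hv⟩
    have hy := snd_ne_zero_of_sub_eq_one h hv
    ext <;> field_simp
  · rintro v ⟨h, hpow⟩
    have hw := snd_ne_zero_of_add_eq_one_of_pow_add_pow_eq_neg_one hs.pos.ne' h2 h hpow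
    ext <;> field_simp
  · rintro v ⟨⟨h, hpow⟩, hv⟩
    have hy := snd_ne_zero_of_sub_eq_one h hv
    refine ⟨?_, ?_⟩
    · field_simp
      linear_combination h
    · rw [div_pow, div_pow, hneg, one_pow]
      field_simp
      linear_combination hpow
  · rintro v ⟨h, hpow⟩
    have hw := snd_ne_zero_of_add_eq_one_of_pow_add_pow_eq_neg_one hs.pos.ne' h2 h hpow
    refine ⟨⟨?_, ?_⟩, fun hv => hw ?_⟩
    · field_simp
      linear_combination -h
    · rw [div_pow, div_pow, hneg, hneg, one_pow]
      field_simp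
      linear_combination -hpow
    · have := congrArg Prod.snd hv
      field_simp at this
      simp at this

theorem ncard_sub_eq_one_sub_one_eq_ncard_add_eq_one [Finite K] (hs : Odd s) (h2 : (2 : K) ≠ 0) :
    ({v : K × K | v.1 - v.2 = 1 ∧ v.1 ^ s + v.2 ^ s = 1}.ncard : ℤ) - 1 =
      ({v : K × K | v.1 + v.2 = 1 ∧ v.1 ^ s + v.2 ^ s = -1}.ncard : ℤ) := by
  have hmem : ((1 : K), (0 : K)) ∈ {v : K × K | v.1 - v.2 = 1 ∧ v.1 ^ s + v.2 ^ s = 1} := by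
    simp [zero_pow hs.pos.ne']
  rw [← (bijOn_div_snd_of_odd hs h2).ncard_eq, ← Set.ncard_sdiff_singleton_add_one hmem]
  push_cast
  ring

end Bijection

theorem stmt_13_general (K : Type*) [Field K] [Fintype K] (p q s : ℕ)
    [CharP K p] (hodd : Odd p)
    (hq : Fintype.card K = q) (hgcd : Nat.Coprime s (q - 1)) :
    ({v : K × K | v.1 - v.2 = 1 ∧ v.1 ^ s + v.2 ^ s = 1}.ncard : ℤ) - 1 =
      ({v : K × K | v.1 + v.2 = 1 ∧ v.1 ^ s + v.2 ^ s = -1}.ncard : ℤ) := by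
  have hchar : ringChar K ≠ 2 := by
    rw [ringChar.eq K p]
    rintro rfl
    exact Nat.not_odd_iff_even.mpr even_two hodd
  have hq_odd : q % 2 = 1 := hq ▸ FiniteField.odd_card_of_char_ne_two hchar
  have hs : Odd s := (hgcd.coprime_dvd_right (by omega : 2 ∣ q - 1)).odd_of_right
  exact ncard_sub_eq_one_sub_one_eq_ncard_add_eq_one hs (Ring.two_ne_zero hchar)

/-- In odd characteristic, `Q^{(1,−1)}_{1,1} − 1 = Q^{(1,1)}_{1,−1}`. -/
theorem stmt_13 (K : Type*) [Field K] [Fintype K] (p q s : ℕ) (hp : p.Prime)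
    [CharP K p] (hodd : Odd p)
    (hq : Fintype.card K = q) (hs : 0 < s) (hgcd : Nat.Coprime s (q - 1)) :
    ({v : K × K | v.1 - v.2 = 1 ∧ v.1 ^ s + v.2 ^ s = 1}.ncard : ℤ) - 1 =
      ({v : K × K | v.1 + v.2 = 1 ∧ v.1 ^ s + v.2 ^ s = -1}.ncard : ℤ) :=
  stmt_13_general K p q s hodd hq hgcd
end

section
/- Let K be a finite field of order q with s coprime to q−1, and w ∈ K. The count Q^{(1,1)}_{1,w} of pairs (x₁,x₂) ∈ K² with x₁ + x₂ = 1 and x₁^s + x₂^s = w^s is odd if and only if the characteristic p of K is odd and w = 2^{1/s − 1} (where 1/s is the inverse of s mod q−1). -/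
/-!
The swap `(x₁, x₂) ↦ (x₂, x₁)` is an involution of the solution set, so its cardinality has the
parity of the number of solutions on the diagonal. A diagonal solution needs `2x = 1`, hence odd
characteristic and `x = 1/2`, and then `2 · 2⁻ˢ = wˢ`. Because `x ↦ xˢ` is a bijection of `K`
with inverse `x ↦ x^{s'}`, this says exactly `w = 2^{s' - 1}`.
-/

open Function Set

theorem FiniteField.pow_eq_self_of_modEq_one {K : Type*} [GroupWithZero K] [Fintype K] {m : ℕ}
    (hm : m ≠ 0) (h : m ≡ 1 [MOD Fintype.card K - 1]) (x : K) : x ^ m = x := by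
  have hm1 : 1 ≤ m := Nat.one_le_iff_ne_zero.mpr hm
  obtain ⟨k, hk⟩ := (Nat.modEq_iff_dvd' hm1).mp h.symm
  rcases eq_or_ne x 0 with rfl | hx
  · exact zero_pow hm
  · rw [← Nat.sub_add_cancel hm1, hk, pow_add, pow_mul, pow_card_sub_one_eq_one x hx, one_pow,
      one_mul, pow_one]

theorem pow_injective_of_pow_mul_eq_self {M : Type*} [Monoid M] {s s' : ℕ}
    (h : ∀ x : M, x ^ (s * s') = x) : Injective fun x : M => x ^ s :=
  LeftInverse.injective (g := fun x => x ^ s') fun x => by simp only [← pow_mul, h]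

theorem CharP.two_ne_zero_iff_odd (R : Type*) [AddMonoidWithOne R] {p : ℕ} [CharP R p]
    (hp : p.Prime) : (2 : R) ≠ 0 ↔ Odd p := by
  rw [Nat.odd_iff, hp.mod_two_eq_one_iff_ne_two, Ne, ← Nat.cast_ofNat,
    CharP.cast_eq_zero_iff R p, Nat.prime_dvd_prime_iff_eq hp Nat.prime_two]

theorem Set.ncard_modEq_ncard_fixed_of_involutive {α : Type*} {S : Set α} (hS : S.Finite)
    {f : α → α} (hf : Involutive f) (hfS : MapsTo f S S) :
    S.ncard ≡ {a ∈ S | f a = a}.ncard [MOD 2] := by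
  classical
  lift S to Finset α using hS
  have hmoved : ((S.filter fun a => ¬f a = a).card : ZMod 2) = 0 := by
    rw [Finset.card_eq_sum_ones, Nat.cast_sum, Nat.cast_one]
    refine Finset.sum_involution (fun a _ => f a) (fun _ _ => by decide)
      (fun a ha _ => (Finset.mem_filter.mp ha).2) (fun a ha => ?_) (fun a _ => hf a)
    obtain ⟨haS, ha⟩ := Finset.mem_filter.mp ha
    exact Finset.mem_filter.mpr ⟨hfS haS, fun h => ha (hf.injective h)⟩
  have hfixed : {a ∈ (S : Set α) | f a = a} = ↑(S.filter fun a => f a = a) := by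
    ext; simp
  rw [hfixed, ncard_coe_finset, ncard_coe_finset,
    ← Finset.card_filter_add_card_filter_not (s := S) (fun a => f a = a),
    ← ZMod.natCast_eq_natCast_iff, Nat.cast_add, hmoved, add_zero]

theorem Set.Subsingleton.odd_ncard_iff {α : Type*} {S : Set α} (hS : S.Subsingleton) :
    Odd S.ncard ↔ S.Nonempty := by
  rcases hS.eq_empty_or_singleton with rfl | ⟨a, rfl⟩ <;> simp

theorem odd_ncard_iff_exists_mk_self_mem {α : Type*} [Finite α] {S : Set (α × α)}
    (hS : MapsTo Prod.swap S S) (hdiag : ∀ x y, (x, x) ∈ S → (y, y) ∈ S → x = y) :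
    Odd S.ncard ↔ ∃ x, (x, x) ∈ S := by
  have hfixed : {v ∈ S | v.swap = v} = (fun x => (x, x)) '' {x | (x, x) ∈ S} := by
    ext ⟨a, b⟩
    simp only [mem_ofPred_eq, Prod.swap_prod_mk, Prod.mk.injEq, mem_image]
    constructor
    · rintro ⟨hab, rfl, -⟩
      exact ⟨b, hab, rfl, rfl⟩
    · rintro ⟨x, hx, rfl, rfl⟩
      exact ⟨hx, rfl, rfl⟩
  have hsub : {v ∈ S | v.swap = v}.Subsingleton := by
    rw [hfixed]
    exact Subsingleton.image (fun x hx y hy => hdiag x y hx hy) _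
  rw [Nat.odd_iff, ncard_modEq_ncard_fixed_of_involutive S.toFinite Prod.swap_swap hS,
    ← Nat.odd_iff, hsub.odd_ncard_iff, hfixed, image_nonempty]
  rfl

theorem eq_inv_two_of_add_self_eq_one {K : Type*} [DivisionRing K] {x : K} (hx : x + x = 1) :
    x = 2⁻¹ :=
  eq_inv_of_mul_eq_one_left ((mul_two x).trans hx)

theorem exists_add_self_eq_one_and_iff {K : Type*} [DivisionRing K] (P : K → Prop) :
    (∃ x : K, x + x = 1 ∧ P x) ↔ (2 : K) ≠ 0 ∧ P 2⁻¹ := by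
  constructor
  · rintro ⟨x, hx, hPx⟩
    exact ⟨right_ne_zero_of_mul_eq_one ((mul_two x).trans hx),
      eq_inv_two_of_add_self_eq_one hx ▸ hPx⟩
  · rintro ⟨h2, hP⟩
    exact ⟨2⁻¹, by rw [← two_mul, mul_inv_cancel₀ h2], hP⟩

theorem inv_two_pow_add_self_eq_pow_iff {K : Type*} [Field K] {s s' : ℕ} (hs' : s' ≠ 0)
    (hroot : ∀ x : K, x ^ (s * s') = x) (h2 : (2 : K) ≠ 0) (w : K) :
    (2⁻¹ : K) ^ s + 2⁻¹ ^ s = w ^ s ↔ w = 2 ^ (s' - 1) := by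
  have hexp : (s' - 1) * s + s = s * s' := by
    rw [Nat.sub_one_mul, Nat.sub_add_cancel (Nat.le_mul_of_pos_left s (Nat.pos_of_ne_zero hs')),
      mul_comm]
  have hhalf : (2⁻¹ : K) ^ s + 2⁻¹ ^ s = (2 ^ (s' - 1)) ^ s := by
    rw [inv_pow, ← two_mul, ← div_eq_mul_inv, div_eq_iff (pow_ne_zero s h2), ← pow_mul,
      ← pow_add, hexp, hroot]
  rw [hhalf, eq_comm]
  exact (pow_injective_of_pow_mul_eq_self hroot).eq_iff

theorem stmt_14_general (K : Type*) [Field K] [Fintype K] (p q s : ℕ) (hp : p.Prime)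
    [CharP K p] (hq : Fintype.card K = q)
    (hs : 0 < s)
    (s' : ℕ) (hs' : 1 ≤ s') (hinv : s * s' ≡ 1 [MOD q - 1]) (w : K) :
    Odd ({v : K × K | v.1 + v.2 = 1 ∧ v.1 ^ s + v.2 ^ s = w ^ s}.ncard) ↔
      (Odd p ∧ w = (2 : K) ^ (s' - 1)) := by
  have hroot : ∀ x : K, x ^ (s * s') = x :=
    FiniteField.pow_eq_self_of_modEq_one (by positivity) (hq ▸ hinv)
  set S := {v : K × K | v.1 + v.2 = 1 ∧ v.1 ^ s + v.2 ^ s = w ^ s}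
  have hswap : MapsTo Prod.swap S S := fun v ⟨hsum, hpow⟩ =>
    ⟨(add_comm _ _).trans hsum, (add_comm _ _).trans hpow⟩
  calc Odd S.ncard ↔ ∃ x : K, x + x = 1 ∧ x ^ s + x ^ s = w ^ s :=
        odd_ncard_iff_exists_mk_self_mem hswap fun _ _ hx hy =>
          (eq_inv_two_of_add_self_eq_one hx.1).trans (eq_inv_two_of_add_self_eq_one hy.1).symm
    _ ↔ (2 : K) ≠ 0 ∧ (2⁻¹ : K) ^ s + 2⁻¹ ^ s = w ^ s := exists_add_self_eq_one_and_iff _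
    _ ↔ (2 : K) ≠ 0 ∧ w = 2 ^ (s' - 1) :=
        and_congr_right fun h2 => inv_two_pow_add_self_eq_pow_iff (by omega) hroot h2 w
    _ ↔ Odd p ∧ w = 2 ^ (s' - 1) := and_congr_left' (CharP.two_ne_zero_iff_odd K hp)

/-- The count `Q^{(1,1)}_{1,w}` of pairs `(x₁,x₂) ∈ K²` with `x₁ + x₂ = 1` and
`x₁^s + x₂^s = w^s` is odd iff the characteristic `p` is odd and `w = 2^{1/s − 1}`,
where `1/s` is the multiplicative inverse of `s` modulo `q − 1`. -/
theorem stmt_14 (K : Type*) [Field K] [Fintype K] (p n q s : ℕ) (hp : p.Prime)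
    [CharP K p] (hn : 0 < n) (hq : Fintype.card K = q) (hqpn : q = p ^ n)
    (hs : 0 < s) (hgcd : Nat.Coprime s (q - 1))
    (s' : ℕ) (hs' : 1 ≤ s') (hinv : s * s' ≡ 1 [MOD q - 1]) (w : K) :
    Odd ({v : K × K | v.1 + v.2 = 1 ∧ v.1 ^ s + v.2 ^ s = w ^ s}.ncard) ↔
      (Odd p ∧ w = (2 : K) ^ (s' - 1)) :=
  stmt_14_general K p q s hp hq hs s' hs' hinv w
end

section
/- Let K be a finite field of characteristic p and order q, s an invertible exponent over K, and let σ be the generator of Gal(Q(ζ_p)/Q) sending ζ_p to ζ_p^γ for a primitive root γ mod p. Suppose A₀, …, A_{k−1} are distinct Weil sum values permuted in a k-cycle by the restriction τ of σ to the value set (τ(A_i) = A_{i+1 mod k}). Then the frequencies N_{A_i} = |{u ∈ K^× : W_u = A_i}| are all equal, k divides the order m of τ, and N_{A_0} is a multiple of m/k. -/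
/-!
Choose `h ∈ K^×` with `h^s = γ⁻¹`. Since `σ(ψ(x)) = ψ(γx)`, substituting `x ↦ hx` in the Weil
sum gives `σ(W_u) = W_{uc}` with `c = γh`. Hence `σ^d(W_u) = W_{uc^d}`: the period `m` of `σ` on
the Weil values divides `e = ord(c)`, multiplication by `c^d` carries the fibre of `W` over `A`
bijectively onto the fibre over `σ^d(A)`, so all `N_{A_i}` agree, and `k ∣ m` because `σ^m` fixes
`A₀`. Finally the fibre over `A₀` is stable under multiplication by `c^k`, hence a union of
cosets of `⟨c^k⟩`, a group of order `e/k`, which `m/k` divides.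
-/

open Function MulAction

theorem Subgroup.natCard_dvd_natCard_of_mul_mem {G : Type*} [Group G] (H : Subgroup G)
    {F : Set G} (hF : ∀ u ∈ F, ∀ h ∈ H, u * h ∈ F) : Nat.card H ∣ Nat.card F := by
  have hsat : QuotientGroup.mk ⁻¹' (QuotientGroup.mk '' F : Set (G ⧸ H)) = F := by
    refine Set.Subset.antisymm ?_ (Set.subset_preimage_image _ _)
    rintro u ⟨v, hv, hvu⟩
    simpa using hF v hv _ (QuotientGroup.eq.1 hvu)
  rw [← hsat, QuotientGroup.card_preimage_mk]
  exact dvd_mul_right _ _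

theorem orderOf_dvd_natCard_of_mul_mem {G : Type*} [Group G] [Finite G] {g : G} {F : Set G}
    (hF : ∀ u ∈ F, u * g ∈ F) : orderOf g ∣ Nat.card F := by
  have hpow : ∀ n : ℕ, ∀ u ∈ F, u * g ^ n ∈ F := by
    intro n
    induction n with
    | zero => simp
    | succ n ih => exact fun u hu => by simpa [pow_succ, mul_assoc] using hF _ (ih u hu)
  rw [← Nat.card_zpowers]
  refine (Subgroup.zpowers g).natCard_dvd_natCard_of_mul_mem fun u hu h hh => ?_
  obtain ⟨n, rfl⟩ := mem_powers_iff_mem_zpowers.2 hh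
  exact hpow n u hu

section Intertwining

variable {M G α : Type*} [Monoid M] [MulAction M α] [Monoid G] {σ : M} {c : G} {w : G → α}

theorem pow_smul_eq_of_smul_eq (hw : ∀ u, σ • w u = w (u * c)) (d : ℕ) (u : G) :
    σ ^ d • w u = w (u * c ^ d) := by
  induction d generalizing u with
  | zero => simp
  | succ d ih => rw [pow_succ, mul_smul, hw, ih, pow_succ', mul_assoc]

theorem period_dvd_orderOf_of_smul_eq (hw : ∀ u, σ • w u = w (u * c)) :
    period σ w ∣ orderOf c := by
  refine pow_smul_eq_iff_period_dvd.1 (funext fun u => ?_)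
  rw [Pi.smul_apply, pow_smul_eq_of_smul_eq hw, pow_orderOf_eq_one, mul_one]

end Intertwining

theorem natCard_fiber_smul_of_smul_eq {M G α : Type*} [Group M] [MulAction M α] [Group G]
    {σ : M} {c : G} {w : G → α} (hw : ∀ u, σ • w u = w (u * c)) (a : α) :
    Nat.card {u // w u = σ • a} = Nat.card {u // w u = a} :=
  Nat.card_congr ((Equiv.mulRight c).subtypeEquiv fun u => by
    rw [Equiv.coe_mulRight, ← hw, (MulAction.injective σ).eq_iff]).symm

section Cycle

open Fin.NatCast

variable {M α : Type*} [Monoid M] [MulAction M α] {k : ℕ} [NeZero k] {σ : M} {A : Fin k → α}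

theorem pow_smul_eq_of_smul_eq_add_one (hA : ∀ i, σ • A i = A (i + 1)) (d : ℕ) (i : Fin k) :
    σ ^ d • A i = A (i + d) := by
  induction d generalizing i with
  | zero => simp
  | succ d ih => rw [pow_succ, mul_smul, hA, ih, Nat.cast_succ, add_right_comm, add_assoc]

theorem dvd_of_pow_smul_eq_of_smul_eq_add_one (hAinj : Injective A)
    (hA : ∀ i, σ • A i = A (i + 1)) {d : ℕ} (hd : σ ^ d • A 0 = A 0) : k ∣ d := by
  rw [pow_smul_eq_of_smul_eq_add_one hA, zero_add] at hd
  exact Fin.natCast_eq_zero.1 (hAinj hd)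

theorem dvd_period_of_smul_eq_add_one {G : Type*} {w : G → α} (hAinj : Injective A)
    (hA : ∀ i, σ • A i = A (i + 1)) (hA₀ : A 0 ∈ Set.range w) : k ∣ period σ w := by
  obtain ⟨u₀, hu₀⟩ := hA₀
  refine dvd_of_pow_smul_eq_of_smul_eq_add_one hAinj hA ?_
  rw [← hu₀]
  exact congr_fun (pow_period_smul σ w) u₀

end Cycle

section FiberCount

open Fin.NatCast

variable {M G α : Type*} [Group M] [MulAction M α] [Group G] {σ : M} {c : G} {w : G → α}
  {k : ℕ} [NeZero k] {A : Fin k → α}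

theorem natCard_fiber_eq_of_smul_eq_add_one (hw : ∀ u, σ • w u = w (u * c))
    (hA : ∀ i, σ • A i = A (i + 1)) (i j : Fin k) :
    Nat.card {u // w u = A i} = Nat.card {u // w u = A j} := by
  have hfiber (i : Fin k) : Nat.card {u // w u = A i} = Nat.card {u // w u = A 0} := by
    rw [← Fin.cast_val_eq_self i, ← zero_add (i.val : Fin k), ← pow_smul_eq_of_smul_eq_add_one hA]
    exact natCard_fiber_smul_of_smul_eq (pow_smul_eq_of_smul_eq hw _) _
  rw [hfiber i, hfiber j]

theorem period_div_dvd_natCard_fiber [Finite G] (hw : ∀ u, σ • w u = w (u * c))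
    (hAinj : Injective A) (hA : ∀ i, σ • A i = A (i + 1)) (hA₀ : A 0 ∈ Set.range w) :
    period σ w / k ∣ Nat.card {u // w u = A 0} := by
  have hstable : ∀ u ∈ {u | w u = A 0}, u * c ^ k ∈ {u | w u = A 0} :=
    fun u (hu : w u = A 0) => show w (u * c ^ k) = A 0 by
    rw [← pow_smul_eq_of_smul_eq hw, hu,
      pow_smul_eq_of_smul_eq_add_one hA, Fin.natCast_self, add_zero]
  have hk := dvd_period_of_smul_eq_add_one hAinj hA hA₀
  have hc := period_dvd_orderOf_of_smul_eq hw
  calc period σ w / k ∣ orderOf c / k := Nat.div_dvd_div hk hc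
    _ = orderOf (c ^ k) := (orderOf_pow_of_dvd (NeZero.ne k) (hk.trans hc)).symm
    _ ∣ Nat.card {u | w u = A 0} := orderOf_dvd_natCard_of_mul_mem hstable

end FiberCount

theorem map_pow_val_trace {p : ℕ} {K M F : Type*} [CommRing K] [Algebra (ZMod p) K]
    [Monoid M] [FunLike F M M] [MonoidHomClass F M M]
    {ζ : M} (hζ : ζ ^ p = 1) {σ : F} {g : ZMod p} (hσ : σ ζ = ζ ^ g.val) (x : K) :
    σ (ζ ^ (Algebra.trace (ZMod p) K x).val)
      = ζ ^ (Algebra.trace (ZMod p) K (algebraMap (ZMod p) K g * x)).val := by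
  rw [map_pow, hσ, ← pow_mul, pow_eq_pow_mod _ hζ, ← ZMod.val_mul, ← Algebra.smul_def,
    map_smul, smul_eq_mul]

theorem exists_map_sum_pow_sub_mul_eq {K L F : Type*} [CommRing K] [Fintype K]
    [AddCommMonoid L] [FunLike F L L] [AddMonoidHomClass F L L] {s : ℕ}
    (hs : (Nat.card Kˣ).Coprime s) {ψ : K → L} {σ : F} {g : Kˣ}
    (hσψ : ∀ x, σ (ψ x) = ψ (g * x)) :
    ∃ c : Kˣ, ∀ u : K, σ (∑ x, ψ (x ^ s - u * x)) = ∑ x, ψ (x ^ s - u * c * x) := by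
  set h := (powCoprime hs).symm g⁻¹
  have hgh : (g : K) * (h : K) ^ s = 1 := by
    have : h ^ s = g⁻¹ := by simpa [h] using (powCoprime hs).apply_symm_apply g⁻¹
    rw [← Units.val_pow_eq_pow_val, this, Units.mul_inv]
  refine ⟨g * h, fun u => ?_⟩
  rw [map_sum, ← Equiv.sum_comp (Units.mulLeft h)]
  refine Finset.sum_congr rfl fun x _ => ?_
  rw [Units.mulLeft_apply, hσψ, Units.val_mul]
  congr 1
  linear_combination x ^ s * hgh

theorem stmt_17_general (p n s k : ℕ) [NeZero k]
    (K : Type*) [Field K] [Fintype K] [Algebra (ZMod p) K]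
    (hcard : Fintype.card K = p ^ n)
    (hgcd : Nat.Coprime s (p ^ n - 1))
    (L : Type*) [Field L] [Algebra ℚ L]
    (ζ : L) (hζ : IsPrimitiveRoot ζ p)
    (ψ : K → L) (hψ : ∀ x, ψ x = ζ ^ (Algebra.trace (ZMod p) K x).val)
    (W : K → L) (hW : ∀ u, W u = ∑ x : K, ψ (x ^ s - u * x))
    (γ : (ZMod p)ˣ)
    (σ : L ≃ₐ[ℚ] L) (hσ : σ ζ = ζ ^ ((γ : ZMod p)).val)
    (m : ℕ)
    (hm : m = sInf {d : ℕ | 0 < d ∧ ∀ u : Kˣ, (σ ^ d) (W (u : K)) = W (u : K)})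
    (A : Fin k → L) (hAinj : Function.Injective A)
    (hAval : ∀ i, ∃ u : Kˣ, W (u : K) = A i)
    (hcyc : ∀ i : Fin k, σ (A i) = A (i + 1)) :
    (∀ i j : Fin k,
        Nat.card {u : Kˣ // W (u : K) = A i} = Nat.card {u : Kˣ // W (u : K) = A j})
    ∧ k ∣ m
    ∧ (m / k) ∣ Nat.card {u : Kˣ // W (u : K) = A 0} := by
  have hσψ (x : K) :
      σ (ψ x) = ψ ((Units.map (algebraMap (ZMod p) K : ZMod p →* K) γ : Kˣ) * x) := by
    rw [hψ, hψ]
    exact map_pow_val_trace hζ.pow_eq_one hσ x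
  obtain ⟨c, hc⟩ := exists_map_sum_pow_sub_mul_eq (by
    rwa [Nat.card_units, Nat.card_eq_fintype_card, hcard, Nat.coprime_comm]) hσψ
  set w : Kˣ → L := fun u => W u
  have hw (u : Kˣ) : σ • w u = w (u * c) := by
    simp only [w, AlgEquiv.smul_def, hW, hc, Units.val_mul]
  have hA (i : Fin k) : σ • A i = A (i + 1) := by rw [AlgEquiv.smul_def, hcyc]
  have hm_period : m = period σ w := by
    rw [hm, period_eq_minimalPeriod, minimalPeriod_eq_sInf_n_pos_IsPeriodicPt]
    simp only [isPeriodicPt_smul_iff, funext_iff, Pi.smul_apply, AlgEquiv.smul_def, w, gt_iff_lt]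
  rw [hm_period]
  exact ⟨natCard_fiber_eq_of_smul_eq_add_one hw hA,
    dvd_period_of_smul_eq_add_one hAinj hA (hAval 0),
    period_div_dvd_natCard_fiber hw hAinj hA (hAval 0)⟩

/-- If the restriction `τ` (of the generator `σ` of `Gal(ℚ(ζ_p)/ℚ)`, `σ(ζ) = ζ^γ` for a
primitive root `γ` mod `p`) to the Weil value set permutes distinct values
`A₀, …, A_{k−1}` in a `k`-cycle, then the frequencies `N_{A_i}` are all equal,
`k` divides the order `m` of `τ`, and `N_{A₀}` is a multiple of `m/k`. -/
theorem stmt_17 (p n s k : ℕ) (hp : p.Prime) (hn : 0 < n) [NeZero k]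
    (K : Type*) [Field K] [Fintype K] [DecidableEq K] [CharP K p] [Algebra (ZMod p) K]
    (hcard : Fintype.card K = p ^ n)
    (hs : 0 < s) (hgcd : Nat.Coprime s (p ^ n - 1))
    (L : Type*) [Field L] [Algebra ℚ L]
    [IsCyclotomicExtension ({p} : Set ℕ) ℚ L]
    (ζ : L) (hζ : IsPrimitiveRoot ζ p)
    (ψ : K → L) (hψ : ∀ x, ψ x = ζ ^ (Algebra.trace (ZMod p) K x).val)
    (W : K → L) (hW : ∀ u, W u = ∑ x : K, ψ (x ^ s - u * x))
    (γ : (ZMod p)ˣ) (hγ : orderOf γ = p - 1)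
    (σ : L ≃ₐ[ℚ] L) (hσ : σ ζ = ζ ^ ((γ : ZMod p)).val)
    (m : ℕ)
    (hm : m = sInf {d : ℕ | 0 < d ∧ ∀ u : Kˣ, (σ ^ d) (W (u : K)) = W (u : K)})
    (A : Fin k → L) (hAinj : Function.Injective A)
    (hAval : ∀ i, ∃ u : Kˣ, W (u : K) = A i)
    (hcyc : ∀ i : Fin k, σ (A i) = A (i + 1)) :
    (∀ i j : Fin k,
        Nat.card {u : Kˣ // W (u : K) = A i} = Nat.card {u : Kˣ // W (u : K) = A j})
    ∧ k ∣ m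
    ∧ (m / k) ∣ Nat.card {u : Kˣ // W (u : K) = A 0} :=
  stmt_17_general p n s k K hcard hgcd L ζ hζ ψ hψ W hW γ σ hσ m hm A hAinj hAval hcyc
end
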